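/- Suppose f: D → ℝ³ is a smooth map on a connected open set D ⊂ ℂ satisfying the affine sphere structure equations f_{zz} = ψ_z f_z + U e^(−ψ) f_{z̄}, f_{z̄z̄} = Ū e^(−ψ) f_z + ψ_{z̄} f_{z̄}, f_{zz̄} = (1/2)e^ψ f, for smooth ψ: D → ℝ and holomorphic U. Then the function g = det(f_z, f_{z̄}, f)·e^(−ψ) is constant on D (its ∂_z and ∂_{z̄} derivatives vanish). In particular, if det(f_z, f_{z̄}, f)(z₀) = (i/2)e^(ψ(z₀)) at one point z₀ ∈ D, then det(f_z, f_{z̄}, f) = (i/2)e^ψ everywhere on D. -/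

import Mathlib

noncomputable section

/-- Wirtinger derivative `∂_z = (∂_x − i∂_y)/2` of a function `ℂ → ℂ`,
viewed as a real-differentiable map. -/
def wz (F : ℂ → ℂ) (z : ℂ) : ℂ :=
  (fderiv ℝ F z 1 - Complex.I * fderiv ℝ F z Complex.I) / 2

/-- Conjugate Wirtinger derivative `∂_z̄ = (∂_x + i∂_y)/2`. -/
def wzbar (F : ℂ → ℂ) (z : ℂ) : ℂ :=
  (fderiv ℝ F z 1 + Complex.I * fderiv ℝ F z Complex.I) / 2

namespace Stmt16Aux

lemma wz_congr {F G : ℂ → ℂ} {z : ℂ} (h : F =ᶠ[nhds z] G) : wz F z = wz G z := by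
  unfold wz; rw [h.fderiv_eq]

lemma wzbar_congr {F G : ℂ → ℂ} {z : ℂ} (h : F =ᶠ[nhds z] G) : wzbar F z = wzbar G z := by
  unfold wzbar; rw [h.fderiv_eq]

lemma wz_add {F G : ℂ → ℂ} {z : ℂ} (hF : DifferentiableAt ℝ F z) (hG : DifferentiableAt ℝ G z) :
    wz (fun w => F w + G w) z = wz F z + wz G z := by
  unfold wz; rw [fderiv_fun_add hF hG]; simp; ring

lemma wz_sub {F G : ℂ → ℂ} {z : ℂ} (hF : DifferentiableAt ℝ F z) (hG : DifferentiableAt ℝ G z) :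
    wz (fun w => F w - G w) z = wz F z - wz G z := by
  unfold wz; rw [fderiv_fun_sub hF hG]; simp; ring

lemma wz_mul {F G : ℂ → ℂ} {z : ℂ} (hF : DifferentiableAt ℝ F z) (hG : DifferentiableAt ℝ G z) :
    wz (fun w => F w * G w) z = wz F z * G z + F z * wz G z := by
  unfold wz; rw [fderiv_fun_mul hF hG]; simp [smul_eq_mul]; ring

lemma wzbar_add {F G : ℂ → ℂ} {z : ℂ} (hF : DifferentiableAt ℝ F z)
    (hG : DifferentiableAt ℝ G z) :
    wzbar (fun w => F w + G w) z = wzbar F z + wzbar G z := by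
  unfold wzbar; rw [fderiv_fun_add hF hG]; simp; ring

lemma wzbar_sub {F G : ℂ → ℂ} {z : ℂ} (hF : DifferentiableAt ℝ F z)
    (hG : DifferentiableAt ℝ G z) :
    wzbar (fun w => F w - G w) z = wzbar F z - wzbar G z := by
  unfold wzbar; rw [fderiv_fun_sub hF hG]; simp; ring

lemma wzbar_mul {F G : ℂ → ℂ} {z : ℂ} (hF : DifferentiableAt ℝ F z)
    (hG : DifferentiableAt ℝ G z) :
    wzbar (fun w => F w * G w) z = wzbar F z * G z + F z * wzbar G z := by
  unfold wzbar; rw [fderiv_fun_mul hF hG]; simp [smul_eq_mul]; ring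

lemma wz_neg {F : ℂ → ℂ} {z : ℂ} : wz (fun w => -F w) z = - wz F z := by
  unfold wz; rw [fderiv_fun_neg]; simp; ring

lemma wzbar_neg {F : ℂ → ℂ} {z : ℂ} : wzbar (fun w => -F w) z = - wzbar F z := by
  unfold wzbar; rw [fderiv_fun_neg]; simp; ring

lemma wz_conj {F : ℂ → ℂ} {z : ℂ} (hF : DifferentiableAt ℝ F z) :
    wz (fun w => (starRingEnd ℂ) (F w)) z = (starRingEnd ℂ) (wzbar F z) := by
  unfold wz wzbar
  have h : fderiv ℝ (fun w => (starRingEnd ℂ) (F w)) z =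
      (Complex.conjCLE.toContinuousLinearMap).comp (fderiv ℝ F z) :=
    (Complex.conjCLE.toContinuousLinearMap.hasFDerivAt.comp z hF.hasFDerivAt).fderiv
  rw [h]
  simp [Complex.conjCLE_apply, map_div₀, Complex.conj_I, map_ofNat]
  ring

lemma wzbar_conj {F : ℂ → ℂ} {z : ℂ} (hF : DifferentiableAt ℝ F z) :
    wzbar (fun w => (starRingEnd ℂ) (F w)) z = (starRingEnd ℂ) (wz F z) := by
  unfold wz wzbar
  have h : fderiv ℝ (fun w => (starRingEnd ℂ) (F w)) z =
      (Complex.conjCLE.toContinuousLinearMap).comp (fderiv ℝ F z) :=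
    (Complex.conjCLE.toContinuousLinearMap.hasFDerivAt.comp z hF.hasFDerivAt).fderiv
  rw [h]
  simp [Complex.conjCLE_apply, map_div₀, Complex.conj_I, map_ofNat]

lemma wz_cexp {F : ℂ → ℂ} {z : ℂ} (hF : DifferentiableAt ℝ F z) :
    wz (fun w => Complex.exp (F w)) z = Complex.exp (F z) * wz F z := by
  have h : fderiv ℝ (fun w => Complex.exp (F w)) z =
      (((ContinuousLinearMap.smulRight (1 : ℂ →L[ℂ] ℂ) (Complex.exp (F z))).restrictScalars
        ℝ).comp (fderiv ℝ F z)) :=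
    ((((Complex.hasDerivAt_exp (F z)).hasFDerivAt).restrictScalars ℝ).comp z
      hF.hasFDerivAt).fderiv
  unfold wz
  rw [h]; simp [smul_eq_mul]; ring

lemma wzbar_cexp {F : ℂ → ℂ} {z : ℂ} (hF : DifferentiableAt ℝ F z) :
    wzbar (fun w => Complex.exp (F w)) z = Complex.exp (F z) * wzbar F z := by
  have h : fderiv ℝ (fun w => Complex.exp (F w)) z =
      (((ContinuousLinearMap.smulRight (1 : ℂ →L[ℂ] ℂ) (Complex.exp (F z))).restrictScalars
        ℝ).comp (fderiv ℝ F z)) :=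
    ((((Complex.hasDerivAt_exp (F z)).hasFDerivAt).restrictScalars ℝ).comp z
      hF.hasFDerivAt).fderiv
  unfold wzbar
  rw [h]; simp [smul_eq_mul]; ring

lemma fderiv_apply_eq_wz {F : ℂ → ℂ} {z : ℂ} (hF : DifferentiableAt ℝ F z) (v : ℂ) :
    fderiv ℝ F z v = wz F z * v + wzbar F z * (starRingEnd ℂ) v := by
  have hv : v = v.re • (1:ℂ) + v.im • Complex.I := by
    simp [Complex.real_smul, Complex.re_add_im]
  have h2 : fderiv ℝ F z v = v.re • fderiv ℝ F z 1 + v.im • fderiv ℝ F z Complex.I := by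
    conv_lhs => rw [hv]
    rw [map_add, map_smul, map_smul]
  rw [h2]
  unfold wz wzbar
  have hc : (starRingEnd ℂ) v = (v.re : ℂ) - (v.im : ℂ) * Complex.I := by
    simp [Complex.ext_iff]
  rw [hc]
  simp only [Complex.real_smul]
  set a := fderiv ℝ F z 1 with ha
  set b := fderiv ℝ F z Complex.I with hb
  have hv' : v = (v.re : ℂ) + (v.im : ℂ) * Complex.I := (Complex.re_add_im v).symm
  linear_combination (-(a - Complex.I * b)/2) * hv' + ((v.im : ℂ) * b) * Complex.I_mul_I

lemma contDiffOn_wz {F : ℂ → ℂ} {D : Set ℂ} (hD : IsOpen D) (hF : ContDiffOn ℝ (⊤ : ℕ∞) F D) :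
    ContDiffOn ℝ (⊤ : ℕ∞) (wz F) D := by
  have h1 : ContDiffOn ℝ (⊤ : ℕ∞) (fun z => fderiv ℝ F z) D := hF.fderiv_of_isOpen hD (by simp)
  have e1 : ContDiffOn ℝ (⊤ : ℕ∞) (fun z => fderiv ℝ F z 1) D := h1.clm_apply contDiffOn_const
  have eI : ContDiffOn ℝ (⊤ : ℕ∞) (fun z => fderiv ℝ F z Complex.I) D := h1.clm_apply contDiffOn_const
  exact (e1.sub (contDiffOn_const.mul eI)).div_const 2

lemma contDiffOn_wzbar {F : ℂ → ℂ} {D : Set ℂ} (hD : IsOpen D) (hF : ContDiffOn ℝ (⊤ : ℕ∞) F D) :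
    ContDiffOn ℝ (⊤ : ℕ∞) (wzbar F) D := by
  have h1 : ContDiffOn ℝ (⊤ : ℕ∞) (fun z => fderiv ℝ F z) D := hF.fderiv_of_isOpen hD (by simp)
  have e1 : ContDiffOn ℝ (⊤ : ℕ∞) (fun z => fderiv ℝ F z 1) D := h1.clm_apply contDiffOn_const
  have eI : ContDiffOn ℝ (⊤ : ℕ∞) (fun z => fderiv ℝ F z Complex.I) D := h1.clm_apply contDiffOn_const
  exact (e1.add (contDiffOn_const.mul eI)).div_const 2

lemma const_of_fderiv_zero {g : ℂ → ℂ} {D : Set ℂ} (hD : IsOpen D) (hconn : IsPreconnected D)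
    (hdiff : ∀ x ∈ D, DifferentiableAt ℝ g x) (hzero : ∀ x ∈ D, fderiv ℝ g x = 0) :
    ∀ z ∈ D, ∀ w ∈ D, g z = g w := by
  have hloc : ∀ x ∈ D, ∃ ε > 0, Metric.ball x ε ⊆ D ∧ ∀ y ∈ Metric.ball x ε, g y = g x := by
    intro x hx
    obtain ⟨ε, hε, hball⟩ := Metric.isOpen_iff.1 hD x hx
    refine ⟨ε, hε, hball, fun y hy => ?_⟩
    refine (convex_ball x ε).is_const_of_fderivWithin_eq_zero
      (fun t ht => (hdiff t (hball ht)).differentiableWithinAt) (fun t ht => ?_) hy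
      (Metric.mem_ball_self hε)
    rw [fderivWithin_of_isOpen Metric.isOpen_ball ht]
    exact hzero t (hball ht)
  intro z hz w hw
  set u : Set ℂ := {x | x ∈ D ∧ g x = g w} with hu
  set v : Set ℂ := {x | x ∈ D ∧ g x ≠ g w} with hv
  have hou : IsOpen u := by
    rw [Metric.isOpen_iff]
    rintro x ⟨hxD, hxg⟩
    obtain ⟨ε, hε, hball, hconst⟩ := hloc x hxD
    exact ⟨ε, hε, fun y hy => ⟨hball hy, (hconst y hy).trans hxg⟩⟩
  have hov : IsOpen v := by
    rw [Metric.isOpen_iff]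
    rintro x ⟨hxD, hxg⟩
    obtain ⟨ε, hε, hball, hconst⟩ := hloc x hxD
    exact ⟨ε, hε, fun y hy => ⟨hball hy, (hconst y hy).symm ▸ hxg⟩⟩
  have hdis : Disjoint u v := by
    rw [Set.disjoint_left]
    rintro x ⟨_, h1⟩ ⟨_, h2⟩
    exact h2 h1
  have hsub : D ⊆ u ∪ v := by
    intro x hx
    by_cases h : g x = g w
    · exact Or.inl ⟨hx, h⟩
    · exact Or.inr ⟨hx, h⟩
  have : D ⊆ u := hconn.subset_left_of_subset_union hou hov hdis hsub ⟨w, hw, hw, rfl⟩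
  exact (this hz).2

lemma key_det {z : ℂ} (W : (ℂ → ℂ) → ℂ)
    (Wsub : ∀ {F G : ℂ → ℂ}, DifferentiableAt ℝ F z → DifferentiableAt ℝ G z →
      W (fun w => F w - G w) = W F - W G)
    (Wadd : ∀ {F G : ℂ → ℂ}, DifferentiableAt ℝ F z → DifferentiableAt ℝ G z →
      W (fun w => F w + G w) = W F + W G)
    (Wmul : ∀ {F G : ℂ → ℂ}, DifferentiableAt ℝ F z → DifferentiableAt ℝ G z →
      W (fun w => F w * G w) = W F * G z + F z * W G)
    (A0 A1 A2 B0 B1 B2 C0 C1 C2 E : ℂ → ℂ)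
    (dA0 : DifferentiableAt ℝ A0 z) (dA1 : DifferentiableAt ℝ A1 z)
    (dA2 : DifferentiableAt ℝ A2 z)
    (dB0 : DifferentiableAt ℝ B0 z) (dB1 : DifferentiableAt ℝ B1 z)
    (dB2 : DifferentiableAt ℝ B2 z)
    (dC0 : DifferentiableAt ℝ C0 z) (dC1 : DifferentiableAt ℝ C1 z)
    (dC2 : DifferentiableAt ℝ C2 z)
    (dE : DifferentiableAt ℝ E z)
    (p u k : ℂ)
    (hA0 : W A0 = p * A0 z + u * B0 z) (hA1 : W A1 = p * A1 z + u * B1 z)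
    (hA2 : W A2 = p * A2 z + u * B2 z)
    (hB0 : W B0 = k * C0 z) (hB1 : W B1 = k * C1 z) (hB2 : W B2 = k * C2 z)
    (hC0 : W C0 = A0 z) (hC1 : W C1 = A1 z) (hC2 : W C2 = A2 z)
    (hE : W E = -p * E z) :
    W (fun w => (A0 w * B1 w * C2 w - A0 w * B2 w * C1 w - A1 w * B0 w * C2 w
      + A1 w * B2 w * C0 w + A2 w * B0 w * C1 w - A2 w * B1 w * C0 w) * E w) = 0 := by
  have m3 : ∀ {X Y Z : ℂ → ℂ}, DifferentiableAt ℝ X z → DifferentiableAt ℝ Y z →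
      DifferentiableAt ℝ Z z →
      W (fun w => X w * Y w * Z w) = W X * Y z * Z z + X z * W Y * Z z + X z * Y z * W Z := by
    intro X Y Z hX hY hZ
    rw [Wmul (hX.fun_mul hY) hZ, Wmul hX hY]; ring
  have d1 : DifferentiableAt ℝ (fun w => A0 w * B1 w * C2 w) z := (dA0.mul dB1).mul dC2
  have d2 : DifferentiableAt ℝ (fun w => A0 w * B2 w * C1 w) z := (dA0.mul dB2).mul dC1
  have d3 : DifferentiableAt ℝ (fun w => A1 w * B0 w * C2 w) z := (dA1.mul dB0).mul dC2
  have d4 : DifferentiableAt ℝ (fun w => A1 w * B2 w * C0 w) z := (dA1.mul dB2).mul dC0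
  have d5 : DifferentiableAt ℝ (fun w => A2 w * B0 w * C1 w) z := (dA2.mul dB0).mul dC1
  have d6 : DifferentiableAt ℝ (fun w => A2 w * B1 w * C0 w) z := (dA2.mul dB1).mul dC0
  rw [Wmul (((((d1.fun_sub d2).fun_sub d3).fun_add d4).fun_add d5).fun_sub d6) dE,
    Wsub ((((d1.fun_sub d2).fun_sub d3).fun_add d4).fun_add d5) d6,
    Wadd (((d1.fun_sub d2).fun_sub d3).fun_add d4) d5,
    Wadd ((d1.fun_sub d2).fun_sub d3) d4,
    Wsub (d1.fun_sub d2) d3,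
    Wsub d1 d2,
    m3 dA0 dB1 dC2, m3 dA0 dB2 dC1, m3 dA1 dB0 dC2, m3 dA1 dB2 dC0,
    m3 dA2 dB0 dC1, m3 dA2 dB1 dC0,
    hA0, hA1, hA2, hB0, hB1, hB2, hC0, hC1, hC2, hE]
  ring

end Stmt16Aux

open Stmt16Aux

/-- If `f : D → ℝ³ ⊂ ℂ³` satisfies the affine sphere structure equations
`f_zz = ψ_z f_z + Ue^(−ψ) f_z̄`, `f_z̄z̄ = Ūe^(−ψ) f_z + ψ_z̄ f_z̄`, `f_zz̄ = ½e^ψ f`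
on a connected open set `D`, then `g = det(f_z, f_z̄, f)·e^(−ψ)` is constant on `D`;
in particular, if `det(f_z, f_z̄, f) = (i/2)e^ψ` at one point of `D`, then it holds
everywhere on `D`. -/
theorem stmt16 (D : Set ℂ) (hD : IsOpen D) (hconn : IsPreconnected D)
    (f : ℂ → Fin 3 → ℂ) (ψ : ℂ → ℝ) (U : ℂ → ℂ)
    (hfreal : ∀ z ∈ D, ∀ j, (f z j).im = 0)
    (hfsmooth : ∀ j, ContDiffOn ℝ (⊤ : ℕ∞) (fun z => f z j) D)
    (hψ : ContDiffOn ℝ (⊤ : ℕ∞) ψ D) (hU : DifferentiableOn ℂ U D)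
    (heq1 : ∀ z ∈ D, ∀ j, wz (wz (fun w => f w j)) z =
      wz (fun w => ((ψ w : ℝ) : ℂ)) z * wz (fun w => f w j) z
        + U z * Complex.exp (-((ψ z : ℝ) : ℂ)) * wzbar (fun w => f w j) z)
    (heq2 : ∀ z ∈ D, ∀ j, wzbar (wzbar (fun w => f w j)) z =
      (starRingEnd ℂ) (U z) * Complex.exp (-((ψ z : ℝ) : ℂ)) * wz (fun w => f w j) z
        + wzbar (fun w => ((ψ w : ℝ) : ℂ)) z * wzbar (fun w => f w j) z)
    (heq3 : ∀ z ∈ D, ∀ j, wz (wzbar (fun w => f w j)) z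
      = (1 / 2) * Complex.exp (((ψ z : ℝ) : ℂ)) * f z j) :
    let detf : ℂ → ℂ := fun z =>
      Matrix.det (Matrix.of ![fun j => wz (fun t => f t j) z,
        fun j => wzbar (fun t => f t j) z, f z])
    (∀ z ∈ D, ∀ w ∈ D,
      detf z * Complex.exp (-((ψ z : ℝ) : ℂ)) = detf w * Complex.exp (-((ψ w : ℝ) : ℂ))) ∧
    (∀ z₀ ∈ D, detf z₀ = Complex.I / 2 * Complex.exp (((ψ z₀ : ℝ) : ℂ)) →
      ∀ z ∈ D, detf z = Complex.I / 2 * Complex.exp (((ψ z : ℝ) : ℂ))) := by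
  intro detf
  -- notation
  set E : ℂ → ℂ := fun w => Complex.exp (-((ψ w : ℝ) : ℂ)) with hE
  set g : ℂ → ℂ := fun w => detf w * E w with hgdef
  -- smoothness facts
  have hψc : ContDiffOn ℝ (⊤ : ℕ∞) (fun w => ((ψ w : ℝ) : ℂ)) D :=
    Complex.ofRealCLM.contDiff.comp_contDiffOn hψ
  have dloc : ∀ {F : ℂ → ℂ}, ContDiffOn ℝ (⊤ : ℕ∞) F D → ∀ {x : ℂ}, x ∈ D →
      DifferentiableAt ℝ F x := fun {F} hF {x} hx =>
    ((hF.differentiableOn (by simp)) x hx).differentiableAt (hD.mem_nhds hx)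
  have dA : ∀ j, ∀ {x : ℂ}, x ∈ D → DifferentiableAt ℝ (wz (fun t => f t j)) x :=
    fun j _ hx => dloc (contDiffOn_wz hD (hfsmooth j)) hx
  have dB : ∀ j, ∀ {x : ℂ}, x ∈ D → DifferentiableAt ℝ (wzbar (fun t => f t j)) x :=
    fun j _ hx => dloc (contDiffOn_wzbar hD (hfsmooth j)) hx
  have dC : ∀ j, ∀ {x : ℂ}, x ∈ D → DifferentiableAt ℝ (fun t => f t j) x :=
    fun j _ hx => dloc (hfsmooth j) hx
  have dψ : ∀ {x : ℂ}, x ∈ D → DifferentiableAt ℝ (fun w => ((ψ w : ℝ) : ℂ)) x :=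
    fun hx => dloc hψc hx
  have dE : ∀ {x : ℂ}, x ∈ D → DifferentiableAt ℝ E x := fun {x} hx => ((dψ hx).neg).cexp
  -- reality facts
  have hre : ∀ y ∈ D, ∀ j, (starRingEnd ℂ) (f y j) = f y j := fun y hy j =>
    Complex.conj_eq_iff_im.2 (hfreal y hy j)
  have hBA : ∀ j, ∀ y ∈ D, (fun w => (starRingEnd ℂ) (wz (fun t => f t j) w)) =ᶠ[nhds y]
      wzbar (fun t => f t j) := by
    intro j y hy
    filter_upwards [hD.mem_nhds hy] with t ht
    have h1 : (fun w => (starRingEnd ℂ) (f w j)) =ᶠ[nhds t] (fun w => f w j) := by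
      filter_upwards [hD.mem_nhds ht] with s hs using hre s hs j
    calc (starRingEnd ℂ) (wz (fun w => f w j) t)
        = wzbar (fun w => (starRingEnd ℂ) (f w j)) t := (wzbar_conj (dC j ht)).symm
      _ = wzbar (fun w => f w j) t := wzbar_congr h1
  -- the missing structure equation : wzbar (wz f_j) = (1/2) e^ψ f_j
  have heq4 : ∀ x ∈ D, ∀ j, wzbar (wz (fun w => f w j)) x
      = (1 / 2) * Complex.exp (((ψ x : ℝ) : ℂ)) * f x j := by
    intro x hx j
    have h1 : wz (fun w => (starRingEnd ℂ) (wz (fun t => f t j) w)) x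
        = (starRingEnd ℂ) (wzbar (wz (fun t => f t j)) x) := wz_conj (dA j hx)
    have h2 : wz (fun w => (starRingEnd ℂ) (wz (fun t => f t j) w)) x
        = wz (wzbar (fun t => f t j)) x := wz_congr (hBA j x hx)
    have h3 : (starRingEnd ℂ) (wzbar (wz (fun t => f t j)) x)
        = (1 / 2) * Complex.exp (((ψ x : ℝ) : ℂ)) * f x j := by
      rw [← h1, h2]; exact heq3 x hx j
    have h4 := congrArg (starRingEnd ℂ) h3
    rw [Complex.conj_conj] at h4
    rw [h4, map_mul, map_mul, map_div₀, map_one, map_ofNat, ← Complex.exp_conj,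
      Complex.conj_ofReal, hre x hx j]
  -- determinant formula
  have hdetf : ∀ w, detf w = wz (fun t => f t 0) w * wzbar (fun t => f t 1) w * f w 2
      - wz (fun t => f t 0) w * wzbar (fun t => f t 2) w * f w 1
      - wz (fun t => f t 1) w * wzbar (fun t => f t 0) w * f w 2
      + wz (fun t => f t 1) w * wzbar (fun t => f t 2) w * f w 0
      + wz (fun t => f t 2) w * wzbar (fun t => f t 0) w * f w 1
      - wz (fun t => f t 2) w * wzbar (fun t => f t 1) w * f w 0 := by
    intro w
    show Matrix.det _ = _
    rw [Matrix.det_fin_three]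
    simp [Matrix.of_apply]
  have hgfun : g = fun w => (wz (fun t => f t 0) w * wzbar (fun t => f t 1) w * f w 2
      - wz (fun t => f t 0) w * wzbar (fun t => f t 2) w * f w 1
      - wz (fun t => f t 1) w * wzbar (fun t => f t 0) w * f w 2
      + wz (fun t => f t 1) w * wzbar (fun t => f t 2) w * f w 0
      + wz (fun t => f t 2) w * wzbar (fun t => f t 0) w * f w 1
      - wz (fun t => f t 2) w * wzbar (fun t => f t 1) w * f w 0) * E w := by
    funext w; rw [hgdef]; simp only []; rw [hdetf w]
  have hgfun' : g = fun w => -((wzbar (fun t => f t 0) w * wz (fun t => f t 1) w * f w 2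
      - wzbar (fun t => f t 0) w * wz (fun t => f t 2) w * f w 1
      - wzbar (fun t => f t 1) w * wz (fun t => f t 0) w * f w 2
      + wzbar (fun t => f t 1) w * wz (fun t => f t 2) w * f w 0
      + wzbar (fun t => f t 2) w * wz (fun t => f t 0) w * f w 1
      - wzbar (fun t => f t 2) w * wz (fun t => f t 1) w * f w 0) * E w) := by
    funext w; rw [hgdef]; simp only []; rw [hdetf w]; ring
  -- exponential derivatives
  have hwzE : ∀ x ∈ D, wz E x = -(wz (fun w => ((ψ w : ℝ) : ℂ)) x) * E x := by
    intro x hx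
    have h1 : wz E x = Complex.exp (-((ψ x : ℝ) : ℂ)) *
        wz (fun w => -((ψ w : ℝ) : ℂ)) x := wz_cexp (dψ hx).neg
    rw [h1, wz_neg]; ring
  have hwzbarE : ∀ x ∈ D, wzbar E x = -(wzbar (fun w => ((ψ w : ℝ) : ℂ)) x) * E x := by
    intro x hx
    have h1 : wzbar E x = Complex.exp (-((ψ x : ℝ) : ℂ)) *
        wzbar (fun w => -((ψ w : ℝ) : ℂ)) x := wzbar_cexp (dψ hx).neg
    rw [h1, wzbar_neg]; ring
  -- the two derivative computations
  have hwzg : ∀ x ∈ D, wz g x = 0 := by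
    intro x hx
    rw [hgfun]
    exact key_det (fun F => wz F x) (fun hF hG => wz_sub hF hG) (fun hF hG => wz_add hF hG)
      (fun hF hG => wz_mul hF hG)
      (wz (fun t => f t 0)) (wz (fun t => f t 1)) (wz (fun t => f t 2))
      (wzbar (fun t => f t 0)) (wzbar (fun t => f t 1)) (wzbar (fun t => f t 2))
      (fun t => f t 0) (fun t => f t 1) (fun t => f t 2) E
      (dA 0 hx) (dA 1 hx) (dA 2 hx) (dB 0 hx) (dB 1 hx) (dB 2 hx)
      (dC 0 hx) (dC 1 hx) (dC 2 hx) (dE hx)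
      (wz (fun w => ((ψ w : ℝ) : ℂ)) x) (U x * Complex.exp (-((ψ x : ℝ) : ℂ)))
      ((1 / 2) * Complex.exp (((ψ x : ℝ) : ℂ)))
      (heq1 x hx 0) (heq1 x hx 1) (heq1 x hx 2)
      (heq3 x hx 0) (heq3 x hx 1) (heq3 x hx 2)
      rfl rfl rfl (hwzE x hx)
  have hwzbarg : ∀ x ∈ D, wzbar g x = 0 := by
    intro x hx
    have hq2 : ∀ j, wzbar (wzbar (fun t => f t j)) x
        = wzbar (fun w => ((ψ w : ℝ) : ℂ)) x * wzbar (fun t => f t j) x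
          + ((starRingEnd ℂ) (U x) * Complex.exp (-((ψ x : ℝ) : ℂ)))
            * wz (fun t => f t j) x := by
      intro j; rw [heq2 x hx j]; ring
    rw [hgfun', wzbar_neg, neg_eq_zero]
    exact key_det (fun F => wzbar F x) (fun hF hG => wzbar_sub hF hG)
      (fun hF hG => wzbar_add hF hG) (fun hF hG => wzbar_mul hF hG)
      (wzbar (fun t => f t 0)) (wzbar (fun t => f t 1)) (wzbar (fun t => f t 2))
      (wz (fun t => f t 0)) (wz (fun t => f t 1)) (wz (fun t => f t 2))
      (fun t => f t 0) (fun t => f t 1) (fun t => f t 2) E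
      (dB 0 hx) (dB 1 hx) (dB 2 hx) (dA 0 hx) (dA 1 hx) (dA 2 hx)
      (dC 0 hx) (dC 1 hx) (dC 2 hx) (dE hx)
      (wzbar (fun w => ((ψ w : ℝ) : ℂ)) x)
      ((starRingEnd ℂ) (U x) * Complex.exp (-((ψ x : ℝ) : ℂ)))
      ((1 / 2) * Complex.exp (((ψ x : ℝ) : ℂ)))
      (hq2 0) (hq2 1) (hq2 2)
      (heq4 x hx 0) (heq4 x hx 1) (heq4 x hx 2)
      rfl rfl rfl (hwzbarE x hx)
  -- differentiability of g on D
  have hdg : ∀ x ∈ D, DifferentiableAt ℝ g x := by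
    intro x hx
    rw [hgfun]
    exact ((((((((dA 0 hx).mul (dB 1 hx)).mul (dC 2 hx)).sub
      (((dA 0 hx).mul (dB 2 hx)).mul (dC 1 hx))).sub
      (((dA 1 hx).mul (dB 0 hx)).mul (dC 2 hx))).add
      (((dA 1 hx).mul (dB 2 hx)).mul (dC 0 hx))).add
      (((dA 2 hx).mul (dB 0 hx)).mul (dC 1 hx))).sub
      (((dA 2 hx).mul (dB 1 hx)).mul (dC 0 hx))).mul (dE hx)
  have hzero : ∀ x ∈ D, fderiv ℝ g x = 0 := by
    intro x hx
    apply ContinuousLinearMap.ext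
    intro v
    rw [fderiv_apply_eq_wz (hdg x hx) v, hwzg x hx, hwzbarg x hx]
    simp
  have hconst := const_of_fderiv_zero hD hconn hdg hzero
  constructor
  · intro z hz w hw
    exact hconst z hz w hw
  · intro z₀ hz₀ h0 z hz
    have h1 : detf z * E z = detf z₀ * E z₀ := hconst z hz z₀ hz₀
    have hEz : ∀ y, E y = Complex.exp (-((ψ y : ℝ) : ℂ)) := fun y => rfl
    have h2 : detf z₀ * E z₀ = Complex.I / 2 := by
      rw [hEz, h0, mul_assoc, ← Complex.exp_add]
      simp
    have h3 : detf z * Complex.exp (-((ψ z : ℝ) : ℂ)) = Complex.I / 2 := by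
      rw [← hEz]; exact h1.trans h2
    calc detf z = detf z * Complex.exp (-((ψ z : ℝ) : ℂ)) * Complex.exp (((ψ z : ℝ) : ℂ)) := by
          rw [mul_assoc, ← Complex.exp_add]; simp
      _ = Complex.I / 2 * Complex.exp (((ψ z : ℝ) : ℂ)) := by rw [h3]

end
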